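/- Let ε > 0 be small and consider the weight W(τ,τ₁,ξ,ξ₁) = χ_{|ξ| ≫ ⟨ξ₁⟩} |ξ|^{1/2+6ε} / (⟨τ₁+ξ₁²⟩^{1/2+ε}⟨τ-τ₁-(ξ-ξ₁)³⟩^{1/2+ε}). Then sup_{τ,ξ} ‖W(τ,τ₁,ξ,ξ₁)‖_{L²_{τ₁,ξ₁}} ≲ 1. The proof integrates first in τ₁ to reduce to sup_{τ,ξ} ‖χ_{|ξ|≫⟨ξ₁⟩}|ξ|^{1/2+6ε}⟨τ+ξ₁²-(ξ-ξ₁)³⟩^{-1/2-ε}‖_{L²_{ξ₁}}, then changes variables y = τ+ξ₁²-(ξ-ξ₁)³, for which |dy| ∼ |ξ|²|dξ₁| when |ξ| ≫ ⟨ξ₁⟩, yielding the bound |ξ|^{1/2+6ε}·|ξ|^{-1}·‖⟨y⟩^{-1/2-ε}‖_{L²} ≲ 1. -/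

import Mathlib

/-!
Integrate out `τ₁` first. For `q = 1 + 2ε > 1`, the pointwise bound
`⟨u⟩^{-q} ⟨v⟩^{-q} ≤ 2^q ⟨u+v⟩^{-q} (⟨u⟩^{-q} + ⟨v⟩^{-q})` (from `⟨u+v⟩ ≤ 2⟨u⟩` when `|v| ≤ |u|`)
and the integrability of `⟨·⟩^{-q}` bound the `τ₁`-integral by a constant times
`|ξ|^{1+12ε} ⟨τ + ξ₁² - (ξ-ξ₁)³⟩^{-q}`. On the region `4⟨ξ₁⟩ ≤ |ξ|` the resonance function
`y(ξ₁) = τ + ξ₁² - (ξ-ξ₁)³` has derivative `2ξ₁ + 3(ξ-ξ₁)² ≥ ξ²`, so changing variables to `y`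
costs a factor `ξ⁻²`, which absorbs `|ξ|^{1+12ε}` because `ε ≤ 1/12`.
-/
open MeasureTheory Set

noncomputable section

def jap (x : ℝ) : ℝ := Real.sqrt (1 + x ^ 2)

lemma one_le_jap (x : ℝ) : 1 ≤ jap x :=
  Real.one_le_sqrt.2 (le_add_of_nonneg_right (sq_nonneg x))

lemma jap_pos (x : ℝ) : 0 < jap x := one_pos.trans_le (one_le_jap x)

lemma jap_rpow_pos (q x : ℝ) : 0 < jap x ^ q := Real.rpow_pos_of_pos (jap_pos x) q

lemma abs_le_jap (x : ℝ) : |x| ≤ jap x := by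
  rw [jap, ← Real.sqrt_sq_eq_abs]
  exact Real.sqrt_le_sqrt (le_add_of_nonneg_left zero_le_one)

lemma continuous_jap : Continuous jap := by unfold jap; fun_prop

lemma jap_add_le_two_mul {u v : ℝ} (h : |v| ≤ |u|) : jap (u + v) ≤ 2 * jap u := by
  have huv : (u + v) ^ 2 ≤ 4 * u ^ 2 := by
    rw [← sq_abs, ← sq_abs u]
    nlinarith [abs_add_le u v, abs_nonneg (u + v)]
  rw [jap, Real.sqrt_le_iff]
  refine ⟨by linarith [jap_pos u], ?_⟩
  rw [mul_pow, jap, Real.sq_sqrt (by positivity)]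
  linarith

lemma continuous_inv_jap_rpow (q : ℝ) : Continuous fun x => (jap x ^ q)⁻¹ :=
  (continuous_jap.rpow_const fun x => Or.inl (jap_pos x).ne').inv₀
    fun x => (jap_rpow_pos q x).ne'

lemma integrable_inv_jap_rpow {q : ℝ} (hq : 1 < q) : Integrable fun x : ℝ => (jap x ^ q)⁻¹ := by
  refine (integrable_rpow_neg_one_add_norm_sq (E := ℝ) (μ := volume) (r := q)
    (by simpa using hq)).congr (ae_of_all _ fun x => ?_)
  dsimp only
  rw [Real.norm_eq_abs, sq_abs, jap, Real.sqrt_eq_rpow, ← Real.rpow_mul (by positivity),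
    ← Real.rpow_neg (by positivity)]
  ring_nf

lemma integral_inv_jap_rpow_pos {q : ℝ} (hq : 1 < q) : 0 < ∫ x, (jap x ^ q)⁻¹ := by
  have hpos : ∀ x, 0 < (jap x ^ q)⁻¹ := fun x => inv_pos.2 (jap_rpow_pos q x)
  rw [integral_pos_iff_support_of_nonneg (fun x => (hpos x).le) (integrable_inv_jap_rpow hq),
    Function.support_eq_univ fun x => (hpos x).ne']
  simp

lemma inv_jap_rpow_mul_le {q : ℝ} (hq : 0 ≤ q) (u v : ℝ) :
    (jap u ^ q * jap v ^ q)⁻¹ ≤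
      2 ^ q * (jap (u + v) ^ q)⁻¹ * ((jap u ^ q)⁻¹ + (jap v ^ q)⁻¹) := by
  wlog h : |v| ≤ |u| generalizing u v
  · simpa only [mul_comm (jap v ^ q), add_comm v, add_comm (jap v ^ q)⁻¹] using
      this v u (le_of_not_ge h)
  have hu := jap_rpow_pos q u
  have huv := jap_rpow_pos q (u + v)
  have hsum : jap (u + v) ^ q ≤ 2 ^ q * jap u ^ q := by
    rw [← Real.mul_rpow zero_le_two (jap_pos u).le]
    exact Real.rpow_le_rpow (jap_pos _).le (jap_add_le_two_mul h) hq
  have hu_inv : (jap u ^ q)⁻¹ ≤ 2 ^ q * (jap (u + v) ^ q)⁻¹ := by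
    rw [← div_eq_mul_inv, le_div_iff₀ huv, inv_mul_le_iff₀ hu, mul_comm]
    exact hsum
  calc (jap u ^ q * jap v ^ q)⁻¹ = (jap u ^ q)⁻¹ * (jap v ^ q)⁻¹ := mul_inv _ _
    _ ≤ 2 ^ q * (jap (u + v) ^ q)⁻¹ * (jap v ^ q)⁻¹ :=
        mul_le_mul_of_nonneg_right hu_inv (inv_pos.2 (jap_rpow_pos q v)).le
    _ ≤ _ := by gcongr; exact le_add_of_nonneg_left (inv_pos.2 hu).le

lemma integral_inv_jap_rpow_mul_le {q : ℝ} (hq : 1 < q) (a c : ℝ) :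
    ∫ t, (jap (t + a) ^ q * jap (c - t) ^ q)⁻¹ ≤
      2 * 2 ^ q * (∫ x, (jap x ^ q)⁻¹) * (jap (a + c) ^ q)⁻¹ := by
  have hI := integrable_inv_jap_rpow hq
  have h₁ : Integrable fun t => (jap (t + a) ^ q)⁻¹ := hI.comp_add_right a
  have h₂ : Integrable fun t => (jap (c - t) ^ q)⁻¹ := hI.comp_sub_left c
  calc ∫ t, (jap (t + a) ^ q * jap (c - t) ^ q)⁻¹
      ≤ ∫ t, 2 ^ q * (jap (a + c) ^ q)⁻¹ * ((jap (t + a) ^ q)⁻¹ + (jap (c - t) ^ q)⁻¹) := by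
        refine integral_mono_of_nonneg (ae_of_all _ fun t =>
          inv_nonneg.2 (mul_pos (jap_rpow_pos q _) (jap_rpow_pos q _)).le)
          ((h₁.add h₂).const_mul _) (ae_of_all _ fun t => ?_)
        have := inv_jap_rpow_mul_le (by linarith) (t + a) (c - t)
        rwa [show t + a + (c - t) = a + c by ring] at this
    _ = _ := by
        rw [integral_const_mul, integral_add h₁ h₂, integral_add_right_eq_self
          (fun t => (jap t ^ q)⁻¹) a, integral_sub_left_eq_self (fun t => (jap t ^ q)⁻¹) _ c]
        ring

lemma integral_sq_div_jap_rpow_mul_le {r : ℝ} (hr : 1 / 2 < r) (A a c : ℝ) :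
    ∫ t, (A / (jap (t + a) ^ r * jap (c - t) ^ r)) ^ 2 ≤
      A ^ 2 * (2 * 2 ^ (2 * r) * (∫ x, (jap x ^ (2 * r))⁻¹) * (jap (a + c) ^ (2 * r))⁻¹) := by
  have hsq : ∀ x, (jap x ^ r) ^ 2 = jap x ^ (2 * r) := fun x => by
    rw [← Real.rpow_natCast, ← Real.rpow_mul (jap_pos x).le, mul_comm]; norm_num
  simp_rw [div_pow, mul_pow, hsq, div_eq_mul_inv]
  rw [integral_const_mul]
  gcongr
  exact integral_inv_jap_rpow_mul_le (by linarith) a c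

lemma intervalIntegral_le_integral {g : ℝ → ℝ} (hg : Integrable g) (hg₀ : ∀ y, 0 ≤ g y)
    (a b : ℝ) : ∫ y in a..b, g y ≤ ∫ y, g y :=
  calc ∫ y in a..b, g y ≤ ‖∫ y in a..b, g y‖ := Real.le_norm_self _
    _ ≤ ∫ y in uIoc a b, ‖g y‖ := intervalIntegral.norm_integral_le_integral_norm_uIoc
    _ ≤ ∫ y, ‖g y‖ := setIntegral_le_integral hg.norm (ae_of_all _ fun _ => norm_nonneg _)
    _ = ∫ y, g y := by simp_rw [Real.norm_of_nonneg (hg₀ _)]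

lemma setIntegral_comp_le_of_le_deriv {φ φ' g : ℝ → ℝ} {a b m : ℝ} (hab : a ≤ b) (hm : 0 < m)
    (hφ : ∀ x ∈ Icc a b, HasDerivAt φ (φ' x) x) (hφ' : ContinuousOn φ' (Icc a b))
    (hmφ' : ∀ x ∈ Icc a b, m ≤ φ' x) (hg : Continuous g) (hg₀ : ∀ y, 0 ≤ g y)
    (hgi : Integrable g) :
    ∫ x in Icc a b, g (φ x) ≤ m⁻¹ * ∫ y, g y := by
  have hφc : ContinuousOn φ (Icc a b) := fun x hx => (hφ x hx).continuousAt.continuousWithinAt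
  have hgφ : ContinuousOn (g ∘ φ) (Icc a b) := hg.comp_continuousOn hφc
  rw [← uIcc_of_le hab] at hφ hφ'
  calc ∫ x in Icc a b, g (φ x) ≤ ∫ x in Icc a b, m⁻¹ * (φ' x * g (φ x)) := by
        refine setIntegral_mono_on hgφ.integrableOn_Icc
          (continuousOn_const.mul ((uIcc_of_le hab ▸ hφ').mul hgφ)).integrableOn_Icc
          measurableSet_Icc fun x hx => ?_
        rw [← mul_assoc, ← div_eq_inv_mul]
        exact le_mul_of_one_le_left (hg₀ _) ((one_le_div hm).2 (hmφ' x hx))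
    _ = m⁻¹ * ∫ x in a..b, φ' x • (g ∘ φ) x := by
        rw [integral_const_mul, intervalIntegral.integral_of_le hab, integral_Icc_eq_integral_Ioc]
        rfl
    _ ≤ m⁻¹ * ∫ y, g y := by
        rw [intervalIntegral.integral_deriv_smul_comp hφ hφ' hg]
        gcongr
        exact intervalIntegral_le_integral hgi hg₀ _ _

lemma sq_le_deriv_resonance {ξ x : ℝ} (hξ : 1 ≤ |ξ|) (hx : |x| ≤ |ξ| / 4) :
    ξ ^ 2 ≤ 2 * x + 3 * (ξ - x) ^ 2 := by
  have hξx : 3 * |ξ| / 4 ≤ |ξ - x| := by linarith [abs_sub_abs_le_abs_sub ξ x]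
  have hsq : (3 * |ξ| / 4) ^ 2 ≤ (ξ - x) ^ 2 := by
    rw [← sq_abs (ξ - x)]; gcongr
  nlinarith [sq_abs ξ, neg_abs_le x]

lemma setIntegral_Icc_inv_jap_rpow_resonance_le {q ξ : ℝ} (hq : 1 < q) (hξ : 1 ≤ |ξ|) (τ : ℝ) :
    ∫ x in Icc (-(|ξ| / 4)) (|ξ| / 4), (jap (τ + x ^ 2 - (ξ - x) ^ 3) ^ q)⁻¹ ≤
      (ξ ^ 2)⁻¹ * ∫ y, (jap y ^ q)⁻¹ := by
  refine setIntegral_comp_le_of_le_deriv (φ' := fun x => 2 * x + 3 * (ξ - x) ^ 2)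
    (by linarith [abs_nonneg ξ]) (by nlinarith [sq_abs ξ]) (fun x _ => ?_) (by fun_prop)
    (fun x hx => sq_le_deriv_resonance hξ (abs_le.2 hx)) (continuous_inv_jap_rpow q)
    (fun y => inv_nonneg.2 (jap_rpow_pos q y).le) (integrable_inv_jap_rpow hq)
  refine (((hasDerivAt_pow 2 x).const_add τ).sub
    (((hasDerivAt_id x).const_sub ξ).pow 3)).congr_deriv ?_
  simp only [id, Nat.cast_ofNat]
  ring

lemma setOf_four_mul_jap_le_subset_Icc (R : ℝ) :
    {x : ℝ | 4 * jap x ≤ R} ⊆ Icc (-(R / 4)) (R / 4) :=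
  fun x hx => abs_le.1 (by linarith [abs_le_jap x, hx.out])

lemma isCompact_setOf_four_mul_jap_le (R : ℝ) : IsCompact {x : ℝ | 4 * jap x ≤ R} :=
  isCompact_Icc.of_isClosed_subset
    (isClosed_le (continuous_const.mul continuous_jap) continuous_const)
    (setOf_four_mul_jap_le_subset_Icc R)

lemma setIntegral_rpow_mul_inv_jap_rpow_resonance_le {p q : ℝ} (hp : p ≤ 2) (hq : 1 < q)
    (τ ξ : ℝ) :
    ∫ x in {x | 4 * jap x ≤ |ξ|}, |ξ| ^ p * (jap (τ + x ^ 2 - (ξ - x) ^ 3) ^ q)⁻¹ ≤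
      ∫ y, (jap y ^ q)⁻¹ := by
  have hI := (integral_inv_jap_rpow_pos hq).le
  by_cases hξ : 1 ≤ |ξ|
  · have hξ₂ : 0 < ξ ^ 2 := by nlinarith [sq_abs ξ]
    have hpow : |ξ| ^ p ≤ ξ ^ 2 := by
      rw [← sq_abs, ← Real.rpow_natCast]
      exact Real.rpow_le_rpow_of_exponent_le hξ (by norm_num [hp])
    have hcont : Continuous fun x => |ξ| ^ p * (jap (τ + x ^ 2 - (ξ - x) ^ 3) ^ q)⁻¹ :=
      continuous_const.mul ((continuous_inv_jap_rpow q).comp (by fun_prop))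
    calc ∫ x in {x | 4 * jap x ≤ |ξ|}, |ξ| ^ p * (jap (τ + x ^ 2 - (ξ - x) ^ 3) ^ q)⁻¹
        ≤ ∫ x in Icc (-(|ξ| / 4)) (|ξ| / 4), |ξ| ^ p * (jap (τ + x ^ 2 - (ξ - x) ^ 3) ^ q)⁻¹ :=
          setIntegral_mono_set hcont.integrableOn_Icc
            (ae_of_all _ fun x => mul_nonneg (Real.rpow_nonneg (abs_nonneg ξ) p)
              (inv_nonneg.2 (jap_rpow_pos q _).le))
            (setOf_four_mul_jap_le_subset_Icc |ξ|).eventuallyLE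
      _ ≤ |ξ| ^ p * ((ξ ^ 2)⁻¹ * ∫ y, (jap y ^ q)⁻¹) := by
          rw [integral_const_mul]
          gcongr
          exact setIntegral_Icc_inv_jap_rpow_resonance_le hq hξ τ
      _ = |ξ| ^ p / ξ ^ 2 * ∫ y, (jap y ^ q)⁻¹ := by ring
      _ ≤ ∫ y, (jap y ^ q)⁻¹ := mul_le_of_le_one_left hI ((div_le_one hξ₂).2 hpow)
  · have : {x | 4 * jap x ≤ |ξ|} = ∅ :=
      eq_empty_of_forall_notMem fun x hx => hξ (by linarith [one_le_jap x, hx.out])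
    simpa [this] using hI

lemma integral_weight_sq_le {r : ℝ} (hr : 1 / 2 < r) (s τ ξ ξ₁ : ℝ) :
    ∫ τ₁, (if 4 * jap ξ₁ ≤ |ξ| then
        |ξ| ^ s / (jap (τ₁ + ξ₁ ^ 2) ^ r * jap (τ - τ₁ - (ξ - ξ₁) ^ 3) ^ r) else 0) ^ 2 ≤
      2 * 2 ^ (2 * r) * (∫ x, (jap x ^ (2 * r))⁻¹) *
        {x | 4 * jap x ≤ |ξ|}.indicator
          (fun x => |ξ| ^ (2 * s) * (jap (τ + x ^ 2 - (ξ - x) ^ 3) ^ (2 * r))⁻¹) ξ₁ := by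
  by_cases h : 4 * jap ξ₁ ≤ |ξ|
  · have hres : ∀ τ₁, τ - τ₁ - (ξ - ξ₁) ^ 3 = τ - (ξ - ξ₁) ^ 3 - τ₁ := fun _ => by ring
    simp_rw [if_pos h, indicator_of_mem (show ξ₁ ∈ {x | 4 * jap x ≤ |ξ|} from h), hres]
    refine (integral_sq_div_jap_rpow_mul_le hr _ _ _).trans_eq ?_
    rw [← Real.rpow_mul_natCast (abs_nonneg ξ),
      show ξ₁ ^ 2 + (τ - (ξ - ξ₁) ^ 3) = τ + ξ₁ ^ 2 - (ξ - ξ₁) ^ 3 by ring]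
    push_cast
    ring_nf
  · simp [h]

/-- Cauchy–Schwarz kernel bound: for small `ε > 0`, uniformly in `(τ, ξ)`,
`‖χ_{|ξ| ≫ ⟨ξ₁⟩} |ξ|^{1/2+6ε} ⟨τ₁+ξ₁²⟩^{-1/2-ε} ⟨τ-τ₁-(ξ-ξ₁)³⟩^{-1/2-ε}‖²_{L²_{τ₁,ξ₁}} ≤ C`. -/
theorem weight_kernel_l2_bound (ε : ℝ) (hε : 0 < ε) (hε' : ε ≤ 1/12) :
    ∃ C : ℝ, 0 < C ∧ ∀ τ ξ : ℝ,
      (∫ ξ₁ : ℝ, ∫ τ₁ : ℝ,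
        (if 4 * jap ξ₁ ≤ |ξ| then
          |ξ| ^ (1/2 + 6 * ε) /
            (jap (τ₁ + ξ₁ ^ 2) ^ (1/2 + ε) * jap (τ - τ₁ - (ξ - ξ₁) ^ 3) ^ (1/2 + ε))
        else 0) ^ 2) ≤ C := by
  have hq : 1 < 2 * (1 / 2 + ε) := by linarith
  set I := ∫ x, (jap x ^ (2 * (1 / 2 + ε)))⁻¹
  have hI : 0 < I := integral_inv_jap_rpow_pos hq
  set K := 2 * 2 ^ (2 * (1 / 2 + ε)) * I
  refine ⟨K * I, by positivity, fun τ ξ => ?_⟩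
  set S := {x : ℝ | 4 * jap x ≤ |ξ|}
  set h := fun x =>
    |ξ| ^ (2 * (1 / 2 + 6 * ε)) * (jap (τ + x ^ 2 - (ξ - x) ^ 3) ^ (2 * (1 / 2 + ε)))⁻¹
  have hS : IsCompact S := isCompact_setOf_four_mul_jap_le |ξ|
  have hh : Continuous h := continuous_const.mul ((continuous_inv_jap_rpow _).comp (by fun_prop))
  calc _ ≤ ∫ ξ₁, K * S.indicator h ξ₁ :=
        integral_mono_of_nonneg (ae_of_all _ fun _ => integral_nonneg fun _ => sq_nonneg _)
          (((hh.continuousOn.integrableOn_compact hS).integrable_indicator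
            hS.measurableSet).const_mul K)
          (ae_of_all _ fun ξ₁ => integral_weight_sq_le (by linarith) _ τ ξ ξ₁)
    _ = K * ∫ ξ₁ in S, h ξ₁ := by rw [integral_const_mul, integral_indicator hS.measurableSet]
    _ ≤ K * I := by
        gcongr
        exact setIntegral_rpow_mul_inv_jap_rpow_resonance_le (by linarith) hq τ ξ
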